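/- arXiv:2505.22529 — 2 statements merged into one kernel-verified Lean document; each statement's English description precedes it below -/
import Mathlib

section
/- For any F ∈ ℝ^N with 0 < F_i < 1/α for all i, equality ⟨log(F/Ψ_α(F)), Q^α(F)⟩ = 0 holds if and only if (F_i/Ψ_α(F_i))·(F_j/Ψ_α(F_j)) = (F_k/Ψ_α(F_k))·(F_l/Ψ_α(F_l)) for all indices i,j,k,l ∈ {1,…,N} with Γ_{ij}^{kl} ≠ 0. -/
open Real Finset Filter Set

noncomputable def Psi (α y : ℝ) : ℝ :=
  (1 - α * y) ^ α * (1 + (1 - α) * y) ^ (1 - α)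

noncomputable def Qop {N : ℕ} (α : ℝ) (Γ : Fin N → Fin N → Fin N → Fin N → ℝ)
    (F : Fin N → ℝ) : Fin N → ℝ := fun i =>
  ∑ j, ∑ k, ∑ l, Γ i j k l *
    (F k * F l * Psi α (F i) * Psi α (F j) - F i * F j * Psi α (F k) * Psi α (F l))

def dotN {N : ℕ} (u v : Fin N → ℝ) : ℝ := ∑ i, u i * v i

def GammaOK {N d : ℕ} (p : Fin N → Fin d → ℝ)
    (Γ : Fin N → Fin N → Fin N → Fin N → ℝ) : Prop :=
  (∀ i j k l, 0 ≤ Γ i j k l) ∧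
  (∀ i j k l, Γ i j k l = Γ j i k l) ∧
  (∀ i j k l, Γ i j k l = Γ k l i j) ∧
  (∀ i j k l, Γ i j k l ≠ 0 →
    (∀ m, p i m + p j m = p k m + p l m) ∧
    (∑ m, (p i m) ^ 2) + (∑ m, (p j m) ^ 2) = (∑ m, (p k m) ^ 2) + (∑ m, (p l m) ^ 2))

def IsCollInv {N : ℕ} (Γ : Fin N → Fin N → Fin N → Fin N → ℝ) (φ : Fin N → ℝ) : Prop :=
  ∀ i j k l, Γ i j k l ≠ 0 → φ i + φ j = φ k + φ l

def IsNormal {N d : ℕ} (p : Fin N → Fin d → ℝ)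
    (Γ : Fin N → Fin N → Fin N → Fin N → ℝ) : Prop :=
  ∀ φ : Fin N → ℝ, IsCollInv Γ φ →
    ∃ (a c : ℝ) (b : Fin d → ℝ), ∀ i, φ i = a + (∑ m, b m * p i m) + c * ∑ m, (p i m) ^ 2

def IsEquilib {N d : ℕ} (α : ℝ) (p : Fin N → Fin d → ℝ) (P : Fin N → ℝ) : Prop :=
  (∀ i, 0 < P i ∧ P i < 1 / α) ∧
  ∃ (K : ℝ) (b : Fin d → ℝ) (c : ℝ), 0 < K ∧
    ∀ i, P i / Psi α (P i) = K * Real.exp (-(∑ m, b m * p i m) - c * ∑ m, (p i m) ^ 2)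

noncomputable def muF (α y : ℝ) : ℝ :=
  y * Real.log y + (1 - α * y) * Real.log (1 - α * y)
    - (1 + (1 - α) * y) * Real.log (1 + (1 - α) * y)

noncomputable def Rfun {N : ℕ} (α : ℝ) (P : Fin N → ℝ) (i : Fin N) : ℝ :=
  P i * (1 - α * P i) * (1 + (1 - α) * P i)

noncomputable def Pcoef {N : ℕ} (α : ℝ) (P : Fin N → ℝ) (i j k l : Fin N) : ℝ :=
  P i * P j * Psi α (P k) * Psi α (P l) / Real.sqrt (Rfun α P i)

noncomputable def Lop {N : ℕ} (α : ℝ) (Γ : Fin N → Fin N → Fin N → Fin N → ℝ)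
    (P : Fin N → ℝ) (f : Fin N → ℝ) : Fin N → ℝ := fun i =>
  ∑ j, ∑ k, ∑ l, Γ i j k l / Real.sqrt (Rfun α P i) *
    (Pcoef α P i j k l * f i + Pcoef α P j i k l * f j
      - Pcoef α P k l i j * f k - Pcoef α P l k i j * f l)

/-!
Write `g = F / Ψ_α(F)`. Since `F_k F_l Ψ_i Ψ_j - F_i F_j Ψ_k Ψ_l = Ψ_i Ψ_j Ψ_k Ψ_l (g_k g_l - g_i g_j)`,
the symmetries of `Γ` turn the entropy dissipation `⟨log g, Q^α(F)⟩` into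
`-¼ ∑ Γ_{ij}^{kl} Ψ_i Ψ_j Ψ_k Ψ_l (g_i g_j - g_k g_l)(log (g_i g_j) - log (g_k g_l))`.
Every summand is nonnegative because `log` is increasing, so the sum vanishes iff each summand does,
i.e. iff `g_i g_j = g_k g_l` whenever `Γ_{ij}^{kl} ≠ 0`.
-/

section CollisionSums

variable {ι : Type*} [Fintype ι]

lemma sum_four_swap_pairs {R : Type*} [AddCommMonoid R] (f : ι → ι → ι → ι → R) :
    ∑ i, ∑ j, ∑ k, ∑ l, f i j k l = ∑ i, ∑ j, ∑ k, ∑ l, f k l i j := by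
  have h : ∀ g : ι × ι → ι × ι → R, ∑ x, ∑ y, g x y = ∑ x, ∑ y, g y x :=
    fun g => Finset.sum_comm
  simpa only [Fintype.sum_prod_type] using h fun x y => f x.1 x.2 y.1 y.2

lemma sum_four_eq_zero_iff_of_nonneg {R : Type*} [AddCommMonoid R] [PartialOrder R]
    [AddLeftMono R] {f : ι → ι → ι → ι → R} (hf : ∀ i j k l, 0 ≤ f i j k l) :
    ∑ i, ∑ j, ∑ k, ∑ l, f i j k l = 0 ↔ ∀ i j k l, f i j k l = 0 := by
  have h := Fintype.sum_eq_zero_iff_of_nonneg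
    (f := fun x : ι × ι × ι × ι => f x.1 x.2.1 x.2.2.1 x.2.2.2) fun x => hf _ _ _ _
  simpa only [Fintype.sum_prod_type, funext_iff, Pi.zero_apply, Prod.forall] using h

lemma four_mul_sum_mul_sum_eq_sum_collision_mul {R : Type*} [CommRing R]
    (E : ι → ι → ι → ι → R) (hswap : ∀ i j k l, E i j k l = E j i k l)
    (hanti : ∀ i j k l, E k l i j = -E i j k l) (φ : ι → R) :
    4 * ∑ i, φ i * ∑ j, ∑ k, ∑ l, E i j k l
      = ∑ i, ∑ j, ∑ k, ∑ l, (φ i + φ j - φ k - φ l) * E i j k l := by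
  have hj : ∑ i, ∑ j, ∑ k, ∑ l, φ j * E i j k l = ∑ i, ∑ j, ∑ k, ∑ l, φ i * E i j k l := by
    rw [Finset.sum_comm]
    exact Fintype.sum_congr _ _ fun i => Fintype.sum_congr _ _ fun j => by simp only [hswap j i]
  have hpairs : ∀ ψ : ι → ι → R, ∑ i, ∑ j, ∑ k, ∑ l, ψ k l * E i j k l
      = -∑ i, ∑ j, ∑ k, ∑ l, ψ i j * E i j k l := fun ψ => by
    rw [sum_four_swap_pairs]
    simp only [← Finset.sum_neg_distrib]
    exact Fintype.sum_congr _ _ fun i => Fintype.sum_congr _ _ fun j =>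
      Fintype.sum_congr _ _ fun k => Fintype.sum_congr _ _ fun l => by rw [hanti, mul_neg]
  have hk := hpairs fun k _ => φ k
  have hl := hpairs fun _ l => φ l
  have hφ : ∑ i, φ i * ∑ j, ∑ k, ∑ l, E i j k l = ∑ i, ∑ j, ∑ k, ∑ l, φ i * E i j k l := by
    simp only [Finset.mul_sum]
  simp only [add_mul, sub_mul, Finset.sum_add_distrib, Finset.sum_sub_distrib] at hk hl ⊢
  rw [hφ, hk, hl, hj]
  ring

end CollisionSums

lemma sub_mul_log_sub_log_nonneg {x y : ℝ} (hx : 0 < x) (hy : 0 < y) :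
    0 ≤ (x - y) * (log x - log y) := by
  rcases le_total x y with h | h
  · exact mul_nonneg_of_nonpos_of_nonpos (sub_nonpos.2 h) (sub_nonpos.2 (log_le_log hx h))
  · exact mul_nonneg (sub_nonneg.2 h) (sub_nonneg.2 (log_le_log hy h))

lemma sub_mul_log_sub_log_eq_zero_iff {x y : ℝ} (hx : 0 < x) (hy : 0 < y) :
    (x - y) * (log x - log y) = 0 ↔ x = y := by
  rw [mul_eq_zero, sub_eq_zero, sub_eq_zero, or_iff_left_of_imp (log_injOn_pos hx hy)]

section EntropyDissipation

variable {ι : Type*} [Fintype ι] (Γ : ι → ι → ι → ι → ℝ)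
  (hΓ0 : ∀ i j k l, 0 ≤ Γ i j k l) (hΓswap : ∀ i j k l, Γ i j k l = Γ j i k l)
  (hΓpair : ∀ i j k l, Γ i j k l = Γ k l i j) {w g : ι → ℝ}

include hΓswap hΓpair in
lemma four_mul_entropy_dissipation_eq (hg : ∀ i, 0 < g i) :
    4 * ∑ i, log (g i) * ∑ j, ∑ k, ∑ l,
        Γ i j k l * (w i * w j * w k * w l * (g k * g l - g i * g j))
      = -∑ i, ∑ j, ∑ k, ∑ l, Γ i j k l * (w i * w j * w k * w l *
          ((g i * g j - g k * g l) * (log (g i * g j) - log (g k * g l)))) := by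
  rw [four_mul_sum_mul_sum_eq_sum_collision_mul
    (fun i j k l => Γ i j k l * (w i * w j * w k * w l * (g k * g l - g i * g j)))
    (fun i j k l => by rw [hΓswap]; ring) (fun i j k l => by rw [hΓpair]; ring),
    ← Finset.sum_neg_distrib]
  refine Fintype.sum_congr _ _ fun i => ?_
  simp only [← Finset.sum_neg_distrib, log_mul (hg _).ne' (hg _).ne']
  refine Fintype.sum_congr _ _ fun j => Fintype.sum_congr _ _ fun k =>
    Fintype.sum_congr _ _ fun l => by ring

include hΓ0 hΓswap hΓpair in
lemma entropy_dissipation_eq_zero_iff (hw : ∀ i, 0 < w i) (hg : ∀ i, 0 < g i) :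
    ∑ i, log (g i) * ∑ j, ∑ k, ∑ l,
        Γ i j k l * (w i * w j * w k * w l * (g k * g l - g i * g j)) = 0
      ↔ ∀ i j k l, Γ i j k l ≠ 0 → g i * g j = g k * g l := by
  have hW : ∀ i j k l, 0 < w i * w j * w k * w l := fun i j k l => by
    have := hw i; have := hw j; have := hw k; have := hw l; positivity
  have hprod : ∀ i j, 0 < g i * g j := fun i j => mul_pos (hg i) (hg j)
  rw [← mul_right_inj' (four_ne_zero' ℝ), mul_zero,
    four_mul_entropy_dissipation_eq Γ hΓswap hΓpair hg, neg_eq_zero,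
    sum_four_eq_zero_iff_of_nonneg fun i j k l => mul_nonneg (hΓ0 i j k l)
      (mul_nonneg (hW i j k l).le (sub_mul_log_sub_log_nonneg (hprod i j) (hprod k l)))]
  simp only [mul_eq_zero, (hW _ _ _ _).ne', false_or,
    sub_mul_log_sub_log_eq_zero_iff (hprod _ _) (hprod _ _), ne_eq, ← or_iff_not_imp_left]

end EntropyDissipation

lemma Psi_pos {α y : ℝ} (hy0 : 0 < y) (hy1 : y < 1 / α) : 0 < Psi α y := by
  have h : α * y < 1 := by
    rcases le_or_gt α 0 with hα | hα
    · nlinarith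
    · rwa [lt_div_iff₀ hα, mul_comm] at hy1
  exact mul_pos (rpow_pos_of_pos (by linarith) _) (rpow_pos_of_pos (by nlinarith) _)

lemma Qop_eq_sum_mul_sub {N : ℕ} (α : ℝ) (Γ : Fin N → Fin N → Fin N → Fin N → ℝ)
    {F : Fin N → ℝ} (hΨ : ∀ i, Psi α (F i) ≠ 0) (i : Fin N) :
    Qop α Γ F i = ∑ j, ∑ k, ∑ l, Γ i j k l *
      (Psi α (F i) * Psi α (F j) * Psi α (F k) * Psi α (F l) *
        (F k / Psi α (F k) * (F l / Psi α (F l)) - F i / Psi α (F i) * (F j / Psi α (F j)))) := by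
  refine sum_congr rfl fun j _ => sum_congr rfl fun k _ => sum_congr rfl fun l _ => ?_
  have := hΨ i; have := hΨ j; have := hΨ k; have := hΨ l
  field_simp

theorem stmt2_general {N d : ℕ}
    (α : ℝ)
    (p : Fin N → Fin d → ℝ) (Γ : Fin N → Fin N → Fin N → Fin N → ℝ)
    (hΓ : GammaOK p Γ)
    (F : Fin N → ℝ) (hF : ∀ i, 0 < F i ∧ F i < 1 / α) :
    dotN (fun i => Real.log (F i / Psi α (F i))) (Qop α Γ F) = 0 ↔
      ∀ i j k l, Γ i j k l ≠ 0 →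
        (F i / Psi α (F i)) * (F j / Psi α (F j))
          = (F k / Psi α (F k)) * (F l / Psi α (F l)) := by
  obtain ⟨hΓ0, hΓswap, hΓpair, -⟩ := hΓ
  have hΨ : ∀ i, 0 < Psi α (F i) := fun i => Psi_pos (hF i).1 (hF i).2
  simp only [dotN, Qop_eq_sum_mul_sub α Γ fun i => (hΨ i).ne']
  exact entropy_dissipation_eq_zero_iff Γ hΓ0 hΓswap hΓpair hΨ fun i => div_pos (hF i).1 (hΨ i)

/-- vanishing entropy dissipation iff the detailed-balance relations hold. -/
theorem stmt2 {N d : ℕ} (hN : 0 < N) (hd : 0 < d)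
    (α : ℝ) (hα0 : 0 < α) (hα1 : α < 1)
    (p : Fin N → Fin d → ℝ) (Γ : Fin N → Fin N → Fin N → Fin N → ℝ)
    (hΓ : GammaOK p Γ)
    (F : Fin N → ℝ) (hF : ∀ i, 0 < F i ∧ F i < 1 / α) :
    dotN (fun i => Real.log (F i / Psi α (F i))) (Qop α Γ F) = 0 ↔
      ∀ i j k l, Γ i j k l ≠ 0 →
        (F i / Psi α (F i)) * (F j / Psi α (F j))
          = (F k / Psi α (F k)) * (F l / Psi α (F l)) :=
  stmt2_general α p Γ hΓ F hF
end

section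
/- The linearized collision operator L (an N×N matrix) is symmetric and positive semi-definite: for all f, g ∈ ℝ^N, ⟨g, Lf⟩ = ⟨Lg, f⟩ and ⟨f, Lf⟩ ≥ 0. -/
open Real Finset Filter Set

/-!
At an equilibrium, `log (P / Ψ(P))` is a collision invariant, which gives detailed balance:
`P_i P_j Ψ_k Ψ_l = P_k P_l Ψ_i Ψ_j` whenever `Γ_{ij}^{kl} ≠ 0`. Hence the weight
`W_{ij}^{kl} = Γ_{ij}^{kl} P_i P_j Ψ_k Ψ_l` is invariant under `i ↔ j` and `(ij) ↔ (kl)`.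
In the variables `h_i = f_i / √R_i`, `⟨g, Lf⟩ = Σ W h^g_i Δh^f` with
`Δh = h_i + h_j - h_k - h_l`, and averaging over the four relabellings turns this into
`¼ Σ W Δh^g Δh^f`, which is symmetric in `f, g` and nonnegative for `f = g`.
-/

section KernelSums

variable {ι : Type*} [Fintype ι]

def collisionDiff (v : ι → ℝ) (i j k l : ι) : ℝ := v i + v j - v k - v l

lemma sum4_congr {F G : ι → ι → ι → ι → ℝ} (h : ∀ i j k l, F i j k l = G i j k l) :
    ∑ i, ∑ j, ∑ k, ∑ l, F i j k l = ∑ i, ∑ j, ∑ k, ∑ l, G i j k l := by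
  simp only [h]

lemma sum4_comm_left (F : ι → ι → ι → ι → ℝ) :
    ∑ i, ∑ j, ∑ k, ∑ l, F i j k l = ∑ i, ∑ j, ∑ k, ∑ l, F j i k l := by
  exact Finset.sum_comm

lemma sum4_comm_pairs (F : ι → ι → ι → ι → ℝ) :
    ∑ i, ∑ j, ∑ k, ∑ l, F i j k l = ∑ i, ∑ j, ∑ k, ∑ l, F k l i j := by
  have h_prod (G : ι → ι → ι → ι → ℝ) : ∑ x : ι × ι, ∑ y : ι × ι, G x.1 x.2 y.1 y.2 =
      ∑ i, ∑ j, ∑ k, ∑ l, G i j k l := by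
    simp only [Fintype.sum_prod_type]
  rw [← h_prod F, ← h_prod fun i j k l => F k l i j]
  exact Finset.sum_comm

lemma sum_kernel_mul_collisionDiff {W : ι → ι → ι → ι → ℝ}
    (hW_left : ∀ i j k l, W i j k l = W j i k l) (hW_pairs : ∀ i j k l, W i j k l = W k l i j)
    (u v : ι → ℝ) :
    ∑ i, ∑ j, ∑ k, ∑ l, W i j k l * u i * collisionDiff v i j k l =
      (∑ i, ∑ j, ∑ k, ∑ l, W i j k l * collisionDiff u i j k l * collisionDiff v i j k l) / 4 := by
  set S := ∑ i, ∑ j, ∑ k, ∑ l, W i j k l * u i * collisionDiff v i j k l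
  have h_j : ∑ i, ∑ j, ∑ k, ∑ l, W i j k l * u j * collisionDiff v i j k l = S := by
    rw [sum4_comm_left]
    refine sum4_congr fun i j k l => ?_
    rw [hW_left j]
    simp only [collisionDiff]
    ring
  have h_k : ∑ i, ∑ j, ∑ k, ∑ l, W i j k l * u k * collisionDiff v i j k l = -S := by
    rw [sum4_comm_pairs]
    simp only [S, ← Finset.sum_neg_distrib]
    refine sum4_congr fun i j k l => ?_
    rw [← hW_pairs]
    simp only [collisionDiff]
    ring
  have h_l : ∑ i, ∑ j, ∑ k, ∑ l, W i j k l * u l * collisionDiff v i j k l = -S := by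
    rw [sum4_comm_pairs, sum4_comm_left]
    simp only [S, ← Finset.sum_neg_distrib]
    refine sum4_congr fun i j k l => ?_
    rw [hW_pairs k l j i, ← hW_left i j k l]
    simp only [collisionDiff]
    ring
  have h_expand : ∑ i, ∑ j, ∑ k, ∑ l, W i j k l * collisionDiff u i j k l * collisionDiff v i j k l
      = S + ∑ i, ∑ j, ∑ k, ∑ l, W i j k l * u j * collisionDiff v i j k l
        - ∑ i, ∑ j, ∑ k, ∑ l, W i j k l * u k * collisionDiff v i j k l
        - ∑ i, ∑ j, ∑ k, ∑ l, W i j k l * u l * collisionDiff v i j k l := by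
    simp only [S, ← Finset.sum_add_distrib, ← Finset.sum_sub_distrib]
    refine sum4_congr fun i j k l => ?_
    simp only [collisionDiff]
    ring
  rw [h_expand, h_j, h_k, h_l]
  ring

lemma sum_kernel_mul_collisionDiff_self_nonneg {W : ι → ι → ι → ι → ℝ}
    (hW : ∀ i j k l, 0 ≤ W i j k l) (u : ι → ℝ) :
    0 ≤ ∑ i, ∑ j, ∑ k, ∑ l, W i j k l * collisionDiff u i j k l * collisionDiff u i j k l :=
  Finset.sum_nonneg fun i _ => Finset.sum_nonneg fun j _ => Finset.sum_nonneg fun k _ =>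
    Finset.sum_nonneg fun l _ => by
      rw [mul_assoc]
      exact mul_nonneg (hW i j k l) (mul_self_nonneg _)

end KernelSums

lemma mul_mul_eq_of_div_eq_mul_exp {ι : Type*} {x y E : ι → ℝ} {K : ℝ} (hK : K ≠ 0)
    (h : ∀ i, x i / y i = K * exp (E i)) {i j k l : ι} (hE : E i + E j = E k + E l) :
    x i * x j * y k * y l = x k * x l * y i * y j := by
  have hx : ∀ i, x i = K * exp (E i) * y i := fun i => by
    -- `y i = 0` would make `x i / y i` the junk value `0`
    have hy : y i ≠ 0 := fun hy => by
      simpa [hy, hK, Real.exp_ne_zero] using (h i).symm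
    rw [← h i, div_mul_cancel₀ _ hy]
  calc x i * x j * y k * y l = K ^ 2 * exp (E i + E j) * (y i * y j * y k * y l) := by
        rw [hx i, hx j, exp_add]; ring
    _ = K ^ 2 * exp (E k + E l) * (y i * y j * y k * y l) := by rw [hE]
    _ = x k * x l * y i * y j := by rw [hx k, hx l, exp_add]; ring

def DetailedBalance {N : ℕ} (α : ℝ) (Γ : Fin N → Fin N → Fin N → Fin N → ℝ) (P : Fin N → ℝ) :
    Prop :=
  ∀ i j k l, Γ i j k l ≠ 0 →
    P i * P j * Psi α (P k) * Psi α (P l) = P k * P l * Psi α (P i) * Psi α (P j)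

section Equilibrium

variable {N d : ℕ} {α : ℝ} {p : Fin N → Fin d → ℝ} {Γ : Fin N → Fin N → Fin N → Fin N → ℝ}
  {P : Fin N → ℝ}

lemma GammaOK.isCollInv_affine (hΓ : GammaOK p Γ) (b : Fin d → ℝ) (c : ℝ) :
    IsCollInv Γ fun i => -(∑ m, b m * p i m) - c * ∑ m, p i m ^ 2 := by
  intro i j k l h
  obtain ⟨h_mom, h_en⟩ := hΓ.2.2.2 i j k l h
  have h_lin : ∑ m, b m * p i m + ∑ m, b m * p j m = ∑ m, b m * p k m + ∑ m, b m * p l m := by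
    simp only [← Finset.sum_add_distrib, ← mul_add, h_mom]
  linear_combination -h_lin - c * h_en

lemma IsEquilib.psi_pos (hP : IsEquilib α p P) (i : Fin N) : 0 < Psi α (P i) := by
  obtain ⟨h_bounds, K, b, c, hK, h_eq⟩ := hP
  have h_ratio : 0 < P i / Psi α (P i) := by rw [h_eq]; positivity
  exact (div_pos_iff_of_pos_left (h_bounds i).1).mp h_ratio

lemma IsEquilib.detailed_balance (hP : IsEquilib α p P) (hΓ : GammaOK p Γ) :
    DetailedBalance α Γ P := by
  obtain ⟨-, K, b, c, hK, h_eq⟩ := hP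
  exact fun i j k l h =>
    mul_mul_eq_of_div_eq_mul_exp hK.ne' h_eq (hΓ.isCollInv_affine b c i j k l h)

end Equilibrium

section LinearizedOperator

variable {N : ℕ} (α : ℝ) (Γ : Fin N → Fin N → Fin N → Fin N → ℝ) (P : Fin N → ℝ)

noncomputable def collisionWeight (i j k l : Fin N) : ℝ :=
  Γ i j k l * (P i * P j * Psi α (P k) * Psi α (P l))

noncomputable def rescale (f : Fin N → ℝ) (i : Fin N) : ℝ := f i / √(Rfun α P i)

variable {α Γ P}

lemma collisionWeight_comm_left (hΓ : ∀ i j k l, Γ i j k l = Γ j i k l) (i j k l : Fin N) :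
    collisionWeight α Γ P i j k l = collisionWeight α Γ P j i k l := by
  simp only [collisionWeight, hΓ i j]
  ring

lemma collisionWeight_of_balance (hbal : DetailedBalance α Γ P) (i j k l : Fin N) :
    Γ i j k l * (P k * P l * Psi α (P i) * Psi α (P j)) = collisionWeight α Γ P i j k l := by
  rcases eq_or_ne (Γ i j k l) 0 with h | h
  · simp [collisionWeight, h]
  · rw [collisionWeight, hbal i j k l h]

lemma collisionWeight_comm_pairs (hΓ : ∀ i j k l, Γ i j k l = Γ k l i j)
    (hbal : DetailedBalance α Γ P) (i j k l : Fin N) :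
    collisionWeight α Γ P i j k l = collisionWeight α Γ P k l i j := by
  rw [← collisionWeight_of_balance hbal, collisionWeight, hΓ]

lemma dotN_Lop_eq_sum (hbal : DetailedBalance α Γ P) (f g : Fin N → ℝ) :
    dotN g (Lop α Γ P f) = ∑ i, ∑ j, ∑ k, ∑ l,
      collisionWeight α Γ P i j k l * rescale α P g i * collisionDiff (rescale α P f) i j k l := by
  simp only [dotN, Lop, Finset.mul_sum]
  refine sum4_congr fun i j k l => ?_
  have h_gain_loss := collisionWeight_of_balance hbal i j k l
  simp only [Pcoef, rescale, collisionDiff, collisionWeight] at h_gain_loss ⊢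
  linear_combination (-(g i / √(Rfun α P i)) * (f k / √(Rfun α P k) + f l / √(Rfun α P l))) *
    h_gain_loss

lemma collisionWeight_nonneg (hΓ : ∀ i j k l, 0 ≤ Γ i j k l) (hP : ∀ i, 0 < P i)
    (hΨ : ∀ i, 0 < Psi α (P i)) (i j k l : Fin N) : 0 ≤ collisionWeight α Γ P i j k l := by
  have := hP i; have := hP j; have := hΨ k; have := hΨ l
  exact mul_nonneg (hΓ i j k l) (by positivity)

lemma dotN_Lop_eq_quarter_sum (hΓ_left : ∀ i j k l, Γ i j k l = Γ j i k l)
    (hΓ_pairs : ∀ i j k l, Γ i j k l = Γ k l i j) (hbal : DetailedBalance α Γ P)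
    (f g : Fin N → ℝ) :
    dotN g (Lop α Γ P f) = (∑ i, ∑ j, ∑ k, ∑ l, collisionWeight α Γ P i j k l *
      collisionDiff (rescale α P g) i j k l * collisionDiff (rescale α P f) i j k l) / 4 := by
  rw [dotN_Lop_eq_sum hbal, sum_kernel_mul_collisionDiff (collisionWeight_comm_left hΓ_left)
    (collisionWeight_comm_pairs hΓ_pairs hbal)]

end LinearizedOperator

lemma dotN_comm {N : ℕ} (u v : Fin N → ℝ) : dotN u v = dotN v u :=
  Finset.sum_congr rfl fun i _ => mul_comm (u i) (v i)

theorem stmt18_general {N d : ℕ}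
    (α : ℝ)
    (p : Fin N → Fin d → ℝ) (Γ : Fin N → Fin N → Fin N → Fin N → ℝ)
    (hΓ : GammaOK p Γ)
    (P : Fin N → ℝ) (hP : IsEquilib α p P) :
    ∀ f g : Fin N → ℝ,
      dotN g (Lop α Γ P f) = dotN (Lop α Γ P g) f ∧
      0 ≤ dotN f (Lop α Γ P f) := by
  have h_bal := hP.detailed_balance hΓ
  obtain ⟨hΓ_nonneg, hΓ_left, hΓ_pairs, -⟩ := hΓ
  have h_quad := dotN_Lop_eq_quarter_sum hΓ_left hΓ_pairs h_bal
  refine fun f g => ⟨?_, ?_⟩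
  · rw [dotN_comm _ f, h_quad, h_quad]
    congr 1
    exact sum4_congr fun i j k l => by ring
  · rw [h_quad]
    refine div_nonneg (sum_kernel_mul_collisionDiff_self_nonneg ?_ _) (by norm_num)
    exact collisionWeight_nonneg hΓ_nonneg (fun i => (hP.1 i).1) hP.psi_pos

/-- Proposition: the linearized collision operator is symmetric and
positive semi-definite. -/
theorem stmt18 {N d : ℕ} (hN : 0 < N) (hd : 0 < d)
    (α : ℝ) (hα0 : 0 < α) (hα1 : α < 1)
    (p : Fin N → Fin d → ℝ) (Γ : Fin N → Fin N → Fin N → Fin N → ℝ)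
    (hΓ : GammaOK p Γ)
    (P : Fin N → ℝ) (hP : IsEquilib α p P) :
    ∀ f g : Fin N → ℝ,
      dotN g (Lop α Γ P f) = dotN (Lop α Γ P g) f ∧
      0 ≤ dotN f (Lop α Γ P f) :=
  stmt18_general α p Γ hΓ P hP
end
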